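/- The FreshMarkovHedge algorithm with positive weights π achieves, for every T ≥ 1 and every sequence of fresh experts i^T = (i_1,…,i_T) with shifts at times σ = (σ_1,…,σ_k), the regret bound L_T − L_T(i^T) ≤ (1/η) Σ_{j=0}^k log(1/π_{i_{σ_j}}) + (1/η) Σ_{j=1}^k log Π_{M_{σ_j − 1}} + (1/η) log Π_{M_T}, where Π_M = Σ_{i=1}^M π_i and σ_0 = 1. -/

import Mathlib

/-!
Follow the comparator through the log of its unnormalized weight `Π_{M_t} v_{i_t,t}`. The mix-loss
bound given by exp-concavity bounds the regret of round `t` by `1/η` times the log-ratio of the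
comparator's unnormalized posterior weight to its unnormalized prior weight. Between shifts the
unnormalized posterior at `t` is the unnormalized weight at `t + 1`, so these ratios telescope. At
a shift to a fresh expert the unnormalized posterior is at most `Π_{M_{σ_j - 1}}`, while the fresh
expert enters with unnormalized weight `π_{i_{σ_j}}`. The first weight is `π_{i_1}` and the last
unnormalized posterior is at most `Π_{M_T}`.
-/

open Finset
open Real (log exp log_mul log_div log_exp log_inv log_le_log exp_pos)

lemma sum_Icc_one_eq_sum_fin {β : Type*} [AddCommMonoid β] (N : ℕ) (f : ℕ → β) :
    ∑ i ∈ Icc 1 N, f i = ∑ i : Fin N, f (i + 1) := by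
  rw [Fin.sum_univ_eq_sum_range (fun i => f (i + 1)) N, ← Ico_add_one_right_eq_Icc,
    sum_Ico_eq_sum_range]
  simp [add_comm]

lemma sum_Icc_one_add_sum_Ioc {β : Type*} [AddCommMonoid β] (f : ℕ → β) {N N' : ℕ}
    (h : N ≤ N') : ∑ i ∈ Icc 1 N, f i + ∑ i ∈ Ioc N N', f i = ∑ i ∈ Icc 1 N', f i := by
  have hIcc (n : ℕ) : Icc 1 n = Ioc 0 n := Icc_add_one_left_eq_Ioc 0 n
  rw [hIcc, hIcc]
  exact sum_Ioc_consecutive f N.zero_le h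

lemma sum_Icc_sub_eq_add_sum_Icc_sub_succ {β : Type*} [AddCommGroup β] (r u : ℕ → β) (S : ℕ) :
    ∑ t ∈ Icc 1 (S + 1), (r t - u t) = r (S + 1) - u 1 + ∑ t ∈ Icc 1 S, (r t - u (t + 1)) := by
  induction S with
  | zero => simp
  | succ S ih =>
    rw [sum_Icc_succ_top (by omega), ih, sum_Icc_succ_top (by omega)]
    abel

lemma sum_le_sum_of_nonpos_off_image {ι κ β : Type*} [DecidableEq ι] [AddCommMonoid β]
    [Preorder β] [AddLeftMono β] {s : Finset ι} {J : Finset κ} {τ : κ → ι}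
    {d : ι → β} {c : κ → β} (hτ : Set.InjOn τ J) (hτs : ∀ j ∈ J, τ j ∈ s)
    (hoff : ∀ t ∈ s, (∀ j ∈ J, τ j ≠ t) → d t ≤ 0) (hon : ∀ j ∈ J, d (τ j) ≤ c j) :
    ∑ t ∈ s, d t ≤ ∑ j ∈ J, c j :=
  calc ∑ t ∈ s, d t
      ≤ ∑ t ∈ J.image τ, d t :=
        sum_le_sum_of_subset_of_nonpos' (image_subset_iff.2 hτs) fun t hts ht =>
          hoff t hts fun j hj hjt => ht (mem_image.2 ⟨j, hj, hjt⟩)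
    _ = ∑ j ∈ J, d (τ j) := sum_image hτ
    _ ≤ ∑ j ∈ J, c j := sum_le_sum hon

def IsExpConcave {E Y : Type*} [AddCommMonoid E] [Module ℝ E] (X : Set E) (ℓ : E → Y → ℝ)
    (η : ℝ) : Prop :=
  ∀ (yy : Y) (N : ℕ), 1 ≤ N → ∀ xs : Fin N → E, (∀ i, xs i ∈ X) →
    ∀ vv : Fin N → ℝ, (∀ i, 0 ≤ vv i) → (∑ i, vv i) = 1 →
    ℓ (∑ i, vv i • xs i) yy ≤ -(1/η) * log (∑ i, vv i * exp (-η * ℓ (xs i) yy))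

lemma IsExpConcave.le_neg_log_sum_Icc {E Y : Type*} [AddCommMonoid E] [Module ℝ E] {X : Set E}
    {ℓ : E → Y → ℝ} {η : ℝ} (h : IsExpConcave X ℓ η) (yy : Y) {N : ℕ} (hN : 1 ≤ N)
    {xs : ℕ → E} (hxs : ∀ i ∈ Icc 1 N, xs i ∈ X) {w : ℕ → ℝ} (hw : ∀ i ∈ Icc 1 N, 0 ≤ w i)
    (hw1 : ∑ i ∈ Icc 1 N, w i = 1) :
    ℓ (∑ i ∈ Icc 1 N, w i • xs i) yy
      ≤ -(1/η) * log (∑ i ∈ Icc 1 N, w i * exp (-η * ℓ (xs i) yy)) := by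
  have hmem (i : Fin N) : (i : ℕ) + 1 ∈ Icc 1 N := mem_Icc.2 ⟨by omega, by omega⟩
  simp only [sum_Icc_one_eq_sum_fin] at hw1 ⊢
  exact h yy N hN _ (fun i => hxs _ (hmem i)) _ (fun i => hw _ (hmem i)) hw1

structure IsFreshShiftSequence (M : ℕ → ℕ) (T : ℕ) (iseq : ℕ → ℕ) (k : ℕ) (σ : ℕ → ℕ) :
    Prop where
  first : σ 0 = 1
  lt_succ : ∀ j, j < k → σ j < σ (j + 1)
  last_le : σ k ≤ T
  admissible : ∀ t, 1 ≤ t → t ≤ T → 1 ≤ iseq t ∧ iseq t ≤ M t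
  eq_prev_of_ne : ∀ t, 2 ≤ t → t ≤ T → (∀ j, 1 ≤ j → j ≤ k → σ j ≠ t) → iseq t = iseq (t - 1)
  fresh : ∀ j, 1 ≤ j → j ≤ k → M (σ j - 1) + 1 ≤ iseq (σ j) ∧ iseq (σ j) ≤ M (σ j)

lemma IsFreshShiftSequence.shift_mem_Icc {M : ℕ → ℕ} {T k : ℕ} {iseq σ : ℕ → ℕ}
    (h : IsFreshShiftSequence M T iseq k σ) {j : ℕ} (hj : j ∈ Icc 1 k) : σ j ∈ Icc 2 T := by
  have hmono : StrictMonoOn σ (Set.Iic k) := strictMonoOn_Iic_of_lt_succ h.lt_succ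
  obtain ⟨hj1, hjk⟩ := mem_Icc.1 hj
  have hfirst : σ 0 < σ j := hmono (Set.mem_Iic.2 k.zero_le) (Set.mem_Iic.2 hjk) hj1
  have hlast : σ j ≤ σ k := hmono.monotoneOn (Set.mem_Iic.2 hjk) (Set.mem_Iic.2 le_rfl) hjk
  exact mem_Icc.2 ⟨by have := h.first; omega, hlast.trans h.last_le⟩

lemma IsFreshShiftSequence.injOn_pred {M : ℕ → ℕ} {T k : ℕ} {iseq σ : ℕ → ℕ}
    (h : IsFreshShiftSequence M T iseq k σ) : Set.InjOn (fun j => σ j - 1) (Icc 1 k) := by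
  intro a ha b hb hab
  have hab' : σ a - 1 = σ b - 1 := hab
  have ha' := mem_Icc.1 (h.shift_mem_Icc ha)
  have hb' := mem_Icc.1 (h.shift_mem_Icc hb)
  exact (strictMonoOn_Iic_of_lt_succ h.lt_succ).injOn (Set.mem_Iic.2 (mem_Icc.1 ha).2)
    (Set.mem_Iic.2 (mem_Icc.1 hb).2) (by omega)

section FreshMarkovHedge

variable {E Y : Type*} (ℓ : E → Y → ℝ) (η : ℝ) (M : ℕ → ℕ) (π : ℕ → ℝ) (xe : ℕ → ℕ → E)
  (y : ℕ → Y) (v : ℕ → ℕ → ℝ)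

/-- `priorMass π N` is the paper's `Π_N`, and `posterior … t i` its `v^m_{i,t}`. -/
def priorMass (N : ℕ) : ℝ := ∑ i ∈ Icc 1 N, π i

noncomputable def mixNormalizer (t : ℕ) : ℝ :=
  ∑ j ∈ Icc 1 (M t), v t j * exp (-η * ℓ (xe j t) (y t))

noncomputable def posterior (t i : ℕ) : ℝ :=
  v t i * exp (-η * ℓ (xe i t) (y t)) / mixNormalizer ℓ η M xe y v t

structure IsFreshMarkovHedge : Prop where
  init : ∀ i, 1 ≤ i → i ≤ M 1 → v 1 i = π i / priorMass π (M 1)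
  update_old : ∀ t, 1 ≤ t → ∀ i, 1 ≤ i → i ≤ M t →
    v (t + 1) i = (priorMass π (M t) / priorMass π (M (t + 1))) * posterior ℓ η M xe y v t i
  update_new : ∀ t, 1 ≤ t → ∀ i, M t + 1 ≤ i → i ≤ M (t + 1) →
    v (t + 1) i = π i / priorMass π (M (t + 1))

variable {ℓ η M π xe y v}

lemma priorMass_pos (hπ : ∀ i, 1 ≤ i → 0 < π i) {N : ℕ} (hN : 1 ≤ N) : 0 < priorMass π N :=
  sum_pos (fun i hi => hπ i (mem_Icc.1 hi).1) ⟨1, mem_Icc.2 ⟨le_rfl, hN⟩⟩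

lemma mixNormalizer_pos {t : ℕ} (hM : 1 ≤ M t) (hv : ∀ i ∈ Icc 1 (M t), 0 < v t i) :
    0 < mixNormalizer ℓ η M xe y v t :=
  sum_pos (fun i hi => mul_pos (hv i hi) (exp_pos _)) ⟨1, mem_Icc.2 ⟨le_rfl, hM⟩⟩

lemma posterior_pos {t i : ℕ} (hM : 1 ≤ M t) (hv : ∀ i ∈ Icc 1 (M t), 0 < v t i)
    (hi : i ∈ Icc 1 (M t)) : 0 < posterior ℓ η M xe y v t i :=
  div_pos (mul_pos (hv i hi) (exp_pos _)) (mixNormalizer_pos hM hv)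

lemma posterior_le_one {t i : ℕ} (hM : 1 ≤ M t) (hv : ∀ i ∈ Icc 1 (M t), 0 < v t i)
    (hi : i ∈ Icc 1 (M t)) : posterior ℓ η M xe y v t i ≤ 1 :=
  (div_le_one (mixNormalizer_pos hM hv)).2 <|
    single_le_sum (f := fun j => v t j * exp (-η * ℓ (xe j t) (y t)))
      (fun j hj => (mul_pos (hv j hj) (exp_pos _)).le) hi

lemma sum_posterior_eq_one {t : ℕ} (hW : 0 < mixNormalizer ℓ η M xe y v t) :
    ∑ i ∈ Icc 1 (M t), posterior ℓ η M xe y v t i = 1 := by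
  unfold posterior
  rw [← sum_div]
  exact div_self hW.ne'

lemma log_mul_posterior_le_log {P : ℝ} (hP : 0 < P) {t i : ℕ} (hM : 1 ≤ M t)
    (hv : ∀ i ∈ Icc 1 (M t), 0 < v t i) (hi : i ∈ Icc 1 (M t)) :
    log (P * posterior ℓ η M xe y v t i) ≤ log P :=
  log_le_log (mul_pos hP (posterior_pos hM hv hi))
    (mul_le_of_le_one_right hP.le (posterior_le_one hM hv hi))

lemma loss_sub_loss_le_log_mul_posterior_sub_log_mul [AddCommMonoid E] [Module ℝ E]
    {X : Set E} (hη : 0 < η) (hexp : IsExpConcave X ℓ η) {t i : ℕ} {x : E}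
    (hx : x = ∑ j ∈ Icc 1 (M t), v t j • xe j t) (hxe : ∀ j ∈ Icc 1 (M t), xe j t ∈ X)
    (hM : 1 ≤ M t) (hv : ∀ j ∈ Icc 1 (M t), 0 < v t j) (hv1 : ∑ j ∈ Icc 1 (M t), v t j = 1)
    (hi : i ∈ Icc 1 (M t)) {P : ℝ} (hP : 0 < P) :
    ℓ x (y t) - ℓ (xe i t) (y t)
      ≤ (1/η) * (log (P * posterior ℓ η M xe y v t i) - log (P * v t i)) := by
  have hW := mixNormalizer_pos (ℓ := ℓ) (η := η) (xe := xe) (y := y) hM hv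
  have hmix : ℓ x (y t) ≤ -(1/η) * log (mixNormalizer ℓ η M xe y v t) :=
    hx ▸ hexp.le_neg_log_sum_Icc (y t) hM hxe (fun j hj => (hv j hj).le) hv1
  have hlog : log (P * posterior ℓ η M xe y v t i) - log (P * v t i)
      = -η * ℓ (xe i t) (y t) - log (mixNormalizer ℓ η M xe y v t) := by
    rw [log_mul hP.ne' (posterior_pos hM hv hi).ne', log_mul hP.ne' (hv i hi).ne', posterior,
      log_div (mul_pos (hv i hi) (exp_pos _)).ne' hW.ne', log_mul (hv i hi).ne' (exp_pos _).ne',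
      log_exp]
    ring
  have hscale : (1/η) * (-η * ℓ (xe i t) (y t) - log (mixNormalizer ℓ η M xe y v t))
      = -ℓ (xe i t) (y t) + -(1/η) * log (mixNormalizer ℓ η M xe y v t) := by
    field_simp
    ring
  rw [hlog, hscale]
  linarith

lemma IsFreshMarkovHedge.weights_pos_and_sum_eq_one (hv : IsFreshMarkovHedge ℓ η M π xe y v)
    (hM : ∀ t, 1 ≤ t → 1 ≤ M t) (hMmono : Monotone M) (hπ : ∀ i, 1 ≤ i → 0 < π i) {t : ℕ}
    (ht : 1 ≤ t) : (∀ i ∈ Icc 1 (M t), 0 < v t i) ∧ ∑ i ∈ Icc 1 (M t), v t i = 1 := by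
  induction t, ht using Nat.le_induction with
  | base =>
    have hmass := priorMass_pos hπ (hM 1 le_rfl)
    have hinit : ∀ i ∈ Icc 1 (M 1), v 1 i = π i / priorMass π (M 1) :=
      fun i hi => hv.init i (mem_Icc.1 hi).1 (mem_Icc.1 hi).2
    refine ⟨fun i hi => hinit i hi ▸ div_pos (hπ i (mem_Icc.1 hi).1) hmass, ?_⟩
    rw [sum_congr rfl hinit, ← sum_div]
    exact div_self hmass.ne'
  | succ t ht ih =>
    have hmass := priorMass_pos hπ (hM t ht)
    have hmass' := priorMass_pos hπ (hM (t + 1) (by omega))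
    have hold : ∀ i ∈ Icc 1 (M t), v (t + 1) i
        = priorMass π (M t) / priorMass π (M (t + 1)) * posterior ℓ η M xe y v t i :=
      fun i hi => hv.update_old t ht i (mem_Icc.1 hi).1 (mem_Icc.1 hi).2
    have hnew : ∀ i ∈ Ioc (M t) (M (t + 1)), v (t + 1) i = π i / priorMass π (M (t + 1)) :=
      fun i hi => hv.update_new t ht i (mem_Ioc.1 hi).1 (mem_Ioc.1 hi).2
    have hMle : M t ≤ M (t + 1) := hMmono t.le_succ
    constructor
    · intro i hi
      obtain ⟨hi1, hi2⟩ := mem_Icc.1 hi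
      rcases le_or_gt i (M t) with hit | hit
      · rw [hold i (mem_Icc.2 ⟨hi1, hit⟩)]
        exact mul_pos (div_pos hmass hmass') (posterior_pos (hM t ht) ih.1 (mem_Icc.2 ⟨hi1, hit⟩))
      · rw [hnew i (mem_Ioc.2 ⟨hit, hi2⟩)]
        exact div_pos (hπ i hi1) hmass'
    · rw [← sum_Icc_one_add_sum_Ioc _ hMle, sum_congr rfl hold, sum_congr rfl hnew, ← mul_sum,
        sum_posterior_eq_one (mixNormalizer_pos (hM t ht) ih.1), mul_one, ← sum_div,
        ← add_div]
      simp only [priorMass]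
      rw [sum_Icc_one_add_sum_Ioc _ hMle]
      exact div_self hmass'.ne'

lemma IsFreshMarkovHedge.priorMass_mul_weight_one (hv : IsFreshMarkovHedge ℓ η M π xe y v)
    (hπ : ∀ i, 1 ≤ i → 0 < π i) (hM : 1 ≤ M 1) {i : ℕ} (hi : i ∈ Icc 1 (M 1)) :
    priorMass π (M 1) * v 1 i = π i := by
  rw [hv.init i (mem_Icc.1 hi).1 (mem_Icc.1 hi).2]
  exact mul_div_cancel₀ _ (priorMass_pos hπ hM).ne'

lemma IsFreshMarkovHedge.priorMass_mul_weight_succ (hv : IsFreshMarkovHedge ℓ η M π xe y v)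
    (hπ : ∀ i, 1 ≤ i → 0 < π i) {t i : ℕ} (ht : 1 ≤ t) (hM : 1 ≤ M (t + 1))
    (hi : i ∈ Icc 1 (M t)) :
    priorMass π (M (t + 1)) * v (t + 1) i = priorMass π (M t) * posterior ℓ η M xe y v t i := by
  rw [hv.update_old t ht i (mem_Icc.1 hi).1 (mem_Icc.1 hi).2, ← mul_assoc,
    mul_div_cancel₀ _ (priorMass_pos hπ hM).ne']

lemma IsFreshMarkovHedge.priorMass_mul_weight_succ_of_fresh
    (hv : IsFreshMarkovHedge ℓ η M π xe y v) (hπ : ∀ i, 1 ≤ i → 0 < π i) {t i : ℕ} (ht : 1 ≤ t)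
    (hM : 1 ≤ M (t + 1)) (hi : M t + 1 ≤ i) (hi' : i ≤ M (t + 1)) :
    priorMass π (M (t + 1)) * v (t + 1) i = π i := by
  rw [hv.update_new t ht i hi hi']
  exact mul_div_cancel₀ _ (priorMass_pos hπ hM).ne'

lemma IsFreshMarkovHedge.sum_log_ratio_le (hv : IsFreshMarkovHedge ℓ η M π xe y v)
    (hM : ∀ t, 1 ≤ t → 1 ≤ M t) (hMmono : Monotone M) (hπ : ∀ i, 1 ≤ i → 0 < π i)
    {S k : ℕ} {iseq σ : ℕ → ℕ} (hseq : IsFreshShiftSequence M (S + 1) iseq k σ) :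
    ∑ t ∈ Icc 1 S, (log (priorMass π (M t) * posterior ℓ η M xe y v t (iseq t))
        - log (priorMass π (M (t + 1)) * v (t + 1) (iseq (t + 1))))
      ≤ ∑ j ∈ Icc 1 k,
        (log (1 / π (iseq (σ j))) + log (priorMass π (M (σ j - 1)))) := by
  classical
  have hprob {t : ℕ} (ht : 1 ≤ t) := hv.weights_pos_and_sum_eq_one hM hMmono hπ ht
  refine sum_le_sum_of_nonpos_off_image hseq.injOn_pred (fun j hj => ?_)
    (fun t ht hoff => ?_) (fun j hj => ?_)
  · have := mem_Icc.1 (hseq.shift_mem_Icc hj)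
    exact mem_Icc.2 ⟨by omega, by omega⟩
  · obtain ⟨ht1, htS⟩ := mem_Icc.1 ht
    have hstay : iseq (t + 1) = iseq t :=
      hseq.eq_prev_of_ne (t + 1) (by omega) (by omega)
        fun j hj1 hjk hσj => hoff j (mem_Icc.2 ⟨hj1, hjk⟩) (by omega)
    have hi := hseq.admissible t ht1 (by omega)
    rw [hstay, hv.priorMass_mul_weight_succ hπ ht1 (hM (t + 1) (by omega)) (mem_Icc.2 hi),
      sub_self]
  · obtain ⟨hσ2, hσT⟩ := mem_Icc.1 (hseq.shift_mem_Icc hj)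
    obtain ⟨hfresh, hfresh'⟩ := hseq.fresh j (mem_Icc.1 hj).1 (mem_Icc.1 hj).2
    obtain ⟨t, hσ⟩ : ∃ t, σ j = t + 1 := ⟨σ j - 1, by omega⟩
    simp only [hσ, Nat.add_sub_cancel] at hfresh hfresh' ⊢
    have ht : 1 ≤ t := by omega
    rw [hv.priorMass_mul_weight_succ_of_fresh hπ ht (hM _ (by omega)) hfresh hfresh',
      one_div, log_inv]
    have : log (priorMass π (M t) * posterior ℓ η M xe y v t (iseq t))
        ≤ log (priorMass π (M t)) :=
      log_mul_posterior_le_log (priorMass_pos hπ (hM t ht)) (hM t ht) (hprob ht).1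
        (mem_Icc.2 (hseq.admissible t ht (by omega)))
    linarith

lemma IsFreshMarkovHedge.regret_le [AddCommMonoid E] [Module ℝ E] {X : Set E} (hη : 0 < η)
    (hexp : IsExpConcave X ℓ η) (hv : IsFreshMarkovHedge ℓ η M π xe y v)
    (hM : ∀ t, 1 ≤ t → 1 ≤ M t) (hMmono : Monotone M) (hπ : ∀ i, 1 ≤ i → 0 < π i)
    (hxe : ∀ i t, 1 ≤ t → 1 ≤ i → i ≤ M t → xe i t ∈ X) {xl : ℕ → E}
    (hxl : ∀ t, 1 ≤ t → xl t = ∑ i ∈ Icc 1 (M t), v t i • xe i t) {S k : ℕ}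
    {iseq σ : ℕ → ℕ} (hseq : IsFreshShiftSequence M (S + 1) iseq k σ) :
    ∑ t ∈ Icc 1 (S + 1), (ℓ (xl t) (y t) - ℓ (xe (iseq t) t) (y t))
      ≤ (1/η) * (log (1 / π (iseq 1))
        + ∑ j ∈ Icc 1 k, (log (1 / π (iseq (σ j))) + log (priorMass π (M (σ j - 1))))
        + log (priorMass π (M (S + 1)))) := by
  have hprob {t : ℕ} (ht : 1 ≤ t) := hv.weights_pos_and_sum_eq_one hM hMmono hπ ht
  have hmass {t : ℕ} (ht : 1 ≤ t) := priorMass_pos hπ (hM t ht)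
  have hmem {t : ℕ} (ht : t ∈ Icc 1 (S + 1)) : iseq t ∈ Icc 1 (M t) :=
    mem_Icc.2 (hseq.admissible t (mem_Icc.1 ht).1 (mem_Icc.1 ht).2)
  let u t := log (priorMass π (M t) * v t (iseq t))
  let r t := log (priorMass π (M t) * posterior ℓ η M xe y v t (iseq t))
  have hstep : ∀ t ∈ Icc 1 (S + 1),
      ℓ (xl t) (y t) - ℓ (xe (iseq t) t) (y t) ≤ (1/η) * (r t - u t) := fun t ht =>
    have ht1 := (mem_Icc.1 ht).1
    loss_sub_loss_le_log_mul_posterior_sub_log_mul hη hexp (hxl t ht1)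
      (fun j hj => hxe j t ht1 (mem_Icc.1 hj).1 (mem_Icc.1 hj).2) (hM t ht1) (hprob ht1).1
      (hprob ht1).2 (hmem ht) (hmass ht1)
  have hshifts : ∑ t ∈ Icc 1 S, (r t - u (t + 1)) ≤ ∑ j ∈ Icc 1 k,
      (log (1 / π (iseq (σ j))) + log (priorMass π (M (σ j - 1)))) :=
    hv.sum_log_ratio_le hM hMmono hπ hseq
  have hlast : r (S + 1) ≤ log (priorMass π (M (S + 1))) :=
    log_mul_posterior_le_log (hmass (by omega)) (hM _ (by omega)) (hprob (by omega)).1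
      (hmem (mem_Icc.2 ⟨by omega, le_rfl⟩))
  have hfirst : log (1 / π (iseq 1)) = -u 1 := by
    simp only [u, hv.priorMass_mul_weight_one hπ (hM 1 le_rfl)
      (hmem (mem_Icc.2 ⟨le_rfl, by omega⟩)), one_div, log_inv]
  calc ∑ t ∈ Icc 1 (S + 1), (ℓ (xl t) (y t) - ℓ (xe (iseq t) t) (y t))
      ≤ ∑ t ∈ Icc 1 (S + 1), (1/η) * (r t - u t) := sum_le_sum hstep
    _ = (1/η) * (r (S + 1) - u 1 + ∑ t ∈ Icc 1 S, (r t - u (t + 1))) := by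
      rw [← mul_sum, sum_Icc_sub_eq_add_sum_Icc_sub_succ]
    _ ≤ _ := mul_le_mul_of_nonneg_left (by linarith) (by positivity)

end FreshMarkovHedge

/-- **FreshMarkovHedge regret bound (Theorem 2).**
FreshMarkovHedge with positive weights π achieves, for every T ≥ 1 and every sequence
of fresh experts i^T with shifts at times σ = (σ_1,…,σ_k),
L_T − L_T(i^T) ≤ (1/η) Σ_{j=0}^k log(1/π_{i_{σ_j}}) + (1/η) Σ_{j=1}^k log Π_{M_{σ_j−1}}
                 + (1/η) log Π_{M_T}, where Π_M = Σ_{i=1}^M π_i and σ_0 = 1. -/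
theorem freshMarkovHedge_regret
    {E : Type*} [AddCommGroup E] [Module ℝ E] {Y : Type*}
    (X : Set E) (ℓ : E → Y → ℝ) (η : ℝ) (hη : 0 < η)
    (hexp : ∀ (yy : Y) (N : ℕ), 1 ≤ N → ∀ xs : Fin N → E, (∀ i, xs i ∈ X) →
      ∀ vv : Fin N → ℝ, (∀ i, 0 ≤ vv i) → (∑ i, vv i) = 1 →
      ℓ (∑ i, vv i • xs i) yy ≤ -(1/η) * Real.log (∑ i, vv i * Real.exp (-η * ℓ (xs i) yy)))
    -- growing expert ensemble
    (M : ℕ → ℕ) (hMpos : ∀ t, 1 ≤ t → 1 ≤ M t) (hMmono : Monotone M)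
    (π : ℕ → ℝ) (hπpos : ∀ i, 1 ≤ i → 0 < π i)
    (xe : ℕ → ℕ → E) (hxe : ∀ i t, 1 ≤ t → 1 ≤ i → i ≤ M t → xe i t ∈ X)
    (y : ℕ → Y) (xl : ℕ → E)
    -- FreshMarkovHedge weights
    (v : ℕ → ℕ → ℝ)
    (hv1 : ∀ i, 1 ≤ i → i ≤ M 1 → v 1 i = π i / ∑ j ∈ Finset.Icc 1 (M 1), π j)
    (hvupd : ∀ t, 1 ≤ t → ∀ i, 1 ≤ i → i ≤ M t →
      v (t+1) i = ((∑ j ∈ Finset.Icc 1 (M t), π j) / ∑ j ∈ Finset.Icc 1 (M (t+1)), π j) *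
        (v t i * Real.exp (-η * ℓ (xe i t) (y t)) /
          ∑ j ∈ Finset.Icc 1 (M t), v t j * Real.exp (-η * ℓ (xe j t) (y t))))
    (hvnew : ∀ t, 1 ≤ t → ∀ i, M t + 1 ≤ i → i ≤ M (t+1) →
      v (t+1) i = π i / ∑ j ∈ Finset.Icc 1 (M (t+1)), π j)
    -- FreshMarkovHedge prediction
    (hxl : ∀ t, 1 ≤ t → xl t = ∑ i ∈ Finset.Icc 1 (M t), v t i • xe i t)
    -- horizon and comparison sequence of fresh experts with shifts at σ_1 < … < σ_k
    (T : ℕ) (hT : 1 ≤ T)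
    (iseq : ℕ → ℕ) (k : ℕ) (σ : ℕ → ℕ)
    (hσ0 : σ 0 = 1)
    (hσmono : ∀ j, j < k → σ j < σ (j+1))
    (hσle : σ k ≤ T)
    -- admissibility: 1 ≤ i_t ≤ M_t
    (hadm : ∀ t, 1 ≤ t → t ≤ T → 1 ≤ iseq t ∧ iseq t ≤ M t)
    -- no shift outside σ
    (hnoshift : ∀ t, 2 ≤ t → t ≤ T → (∀ j, 1 ≤ j → j ≤ k → σ j ≠ t) →
      iseq t = iseq (t-1))
    -- shifts are to fresh experts
    (hfresh : ∀ j, 1 ≤ j → j ≤ k →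
      M (σ j - 1) + 1 ≤ iseq (σ j) ∧ iseq (σ j) ≤ M (σ j)) :
    (∑ t ∈ Finset.Icc 1 T, ℓ (xl t) (y t))
        - (∑ t ∈ Finset.Icc 1 T, ℓ (xe (iseq t) t) (y t))
      ≤ (1/η) * ∑ j ∈ Finset.range (k+1), Real.log (1 / π (iseq (σ j)))
        + (1/η) * ∑ j ∈ Finset.Icc 1 k, Real.log (∑ i ∈ Finset.Icc 1 (M (σ j - 1)), π i)
        + (1/η) * Real.log (∑ i ∈ Finset.Icc 1 (M T), π i) := by
  
  obtain ⟨S, rfl⟩ : ∃ S, T = S + 1 := ⟨T - 1, by omega⟩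
  have hv : IsFreshMarkovHedge ℓ η M π xe y v := ⟨hv1, hvupd, hvnew⟩
  have hseq : IsFreshShiftSequence M (S + 1) iseq k σ :=
    ⟨hσ0, hσmono, hσle, hadm, hnoshift, hfresh⟩
  rw [← sum_sub_distrib]
  refine (hv.regret_le hη hexp hMpos hMmono hπpos hxe hxl hseq).trans_eq ?_
  rw [sum_range_eq_add_Ico _ (by omega : 0 < k + 1), Ico_add_one_right_eq_Icc, hσ0,
    sum_add_distrib]
  simp only [priorMass]
  ring
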